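/- arXiv:math/0508045 — 2 statements merged into one kernel-verified Lean document; each statement's English description precedes it below -/
import Mathlib

section
/- For every z₀ ∈ ℂ \ {0} and all a, b ∈ ℝ, the derivative of F_λ at z₀ applied to the tangent vector z₀(a + ib) equals (F_λ(z₀) - 1)·(aλ|z₀|/(1 - λ + λ|z₀|) + 2bi). -/
noncomputable def Fl (l : ℝ) (z : ℂ) : ℂ :=
  ((1 - l + l * ‖z‖ : ℝ) : ℂ) * (z / (‖z‖ : ℂ)) ^ 2 + 1

/-!
Write `F_λ z - 1 = g(|z|) · (z/|z|)²` with `g r = 1 - λ + λ r`. Along `z₀ (a + ib)` the modulus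
changes at rate `a |z₀|` and the phase `z/|z|` rotates at rate `b`, so the derivative is
`(λ |z₀| a + 2 i b g(|z₀|)) (z₀/|z₀|)²`. Factoring out `F_λ z₀ - 1 = g(|z₀|) (z₀/|z₀|)²` needs
`g(|z₀|) ≠ 0`, which holds since `λ ∈ (0,1)`.
-/

open Complex

theorem hasFDerivAt_norm_of_ne_zero {E : Type*} [NormedAddCommGroup E] [InnerProductSpace ℝ E]
    {x : E} (hx : x ≠ 0) : HasFDerivAt (‖·‖) (‖x‖⁻¹ • innerSL ℝ x) x := by
  have hx' : ‖x‖ ^ 2 ≠ 0 := by positivity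
  have h := (Real.hasDerivAt_sqrt hx').comp_hasFDerivAt x (hasStrictFDerivAt_norm_sq x).hasFDerivAt
  simp only [Function.comp_def, Real.sqrt_sq (norm_nonneg _)] at h
  refine h.congr_fderiv ?_
  rw [← ofNat_smul_eq_nsmul ℝ, smul_smul]
  congr 1
  field_simp

theorem Complex.inner_self_mul (z w : ℂ) : inner ℝ z (z * w) = ‖z‖ ^ 2 * w.re := by
  rw [Complex.inner, mul_right_comm, Complex.mul_conj', ← ofReal_pow, re_ofReal_mul]

theorem Complex.hasFDerivAt_norm {z₀ : ℂ} (hz : z₀ ≠ 0) :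
    ∃ N : ℂ →L[ℝ] ℝ, HasFDerivAt (‖·‖) N z₀ ∧ ∀ w : ℂ, N (z₀ * w) = ‖z₀‖ * w.re := by
  refine ⟨_, hasFDerivAt_norm_of_ne_zero hz, fun w => ?_⟩
  have : ‖z₀‖ ≠ 0 := norm_ne_zero_iff.mpr hz
  rw [_root_.smul_apply, innerSL_apply_apply, inner_self_mul, smul_eq_mul]
  field_simp

theorem Complex.hasFDerivAt_div_norm {z₀ : ℂ} (hz : z₀ ≠ 0) :
    ∃ P : ℂ →L[ℝ] ℂ, HasFDerivAt (fun z : ℂ => z / ‖z‖) P z₀ ∧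
      ∀ w : ℂ, P (z₀ * w) = w.im * I * (z₀ / ‖z₀‖) := by
  obtain ⟨N, hN, hNz⟩ := hasFDerivAt_norm hz
  have hr : (‖z₀‖ : ℂ) ≠ 0 := ofReal_ne_zero.mpr (norm_ne_zero_iff.mpr hz)
  have hinv := (hasDerivAt_inv hr).comp_hasFDerivAt z₀ (ofRealCLM.hasFDerivAt.comp z₀ hN)
  refine ⟨_, (hasFDerivAt_id z₀).mul hinv, fun w => ?_⟩
  simp only [_root_.add_apply, _root_.smul_apply, ContinuousLinearMap.comp_apply,
    ofRealCLM_apply, hNz, ContinuousLinearMap.id_apply, id_eq, smul_eq_mul]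
  field_simp
  push_cast
  linear_combination -(‖z₀‖ : ℂ) * re_add_im w

theorem Complex.hasFDerivAt_ofReal_comp_norm_mul_div_norm_pow {g : ℝ → ℝ} {g' : ℝ} (n : ℕ)
    {z₀ : ℂ} (hz : z₀ ≠ 0) (hg : HasDerivAt g g' ‖z₀‖) :
    ∃ L : ℂ →L[ℝ] ℂ, HasFDerivAt (fun z : ℂ => (g ‖z‖ : ℂ) * (z / ‖z‖) ^ n) L z₀ ∧
      ∀ w : ℂ, L (z₀ * w) =
        ((g' * ‖z₀‖ * w.re : ℝ) + g ‖z₀‖ * n * w.im * I) * (z₀ / ‖z₀‖) ^ n := by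
  obtain ⟨N, hN, hNz⟩ := hasFDerivAt_norm hz
  obtain ⟨P, hP, hPz⟩ := hasFDerivAt_div_norm hz
  have hmod := ofRealCLM.hasFDerivAt.comp z₀ (hg.comp_hasFDerivAt z₀ hN)
  have hphase := (hasDerivAt_pow n (z₀ / ‖z₀‖)).comp_hasFDerivAt z₀ hP
  refine ⟨_, hmod.mul hphase, fun w => ?_⟩
  simp only [_root_.add_apply, _root_.smul_apply, ContinuousLinearMap.comp_apply,
    ofRealCLM_apply, hNz, hPz, smul_eq_mul, Function.comp_apply]
  rcases n with _ | n <;> push_cast <;> ring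

/-- The real derivative of F_λ at z₀ ≠ 0 applied to z₀(a + ib) equals
(F_λ(z₀) - 1)(aλ|z₀|/(1 - λ + λ|z₀|) + 2bi). -/
theorem stmt_3 (l : ℝ) (hl : l ∈ Set.Ioo (0 : ℝ) 1) (z₀ : ℂ) (hz : z₀ ≠ 0) :
    ∃ L : ℂ →L[ℝ] ℂ, HasFDerivAt (Fl l) L z₀ ∧
      ∀ a b : ℝ, L (z₀ * ((a : ℂ) + (b : ℂ) * Complex.I)) =
        (Fl l z₀ - 1) *
          (((a * l * ‖z₀‖ / (1 - l + l * ‖z₀‖) : ℝ) : ℂ)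
            + 2 * (b : ℂ) * Complex.I) := by
  have hg : HasDerivAt (fun r : ℝ => 1 - l + l * r) l ‖z₀‖ := by
    simpa using ((hasDerivAt_id ‖z₀‖).const_mul l).const_add (1 - l)
  obtain ⟨L, hL, hLz⟩ := hasFDerivAt_ofReal_comp_norm_mul_div_norm_pow 2 hz hg
  refine ⟨L, hL.add_const 1, fun a b => ?_⟩
  have hc : (1 - l + l * ‖z₀‖ : ℂ) ≠ 0 := by
    have : 0 < 1 - l + l * ‖z₀‖ := by nlinarith [hl.1, hl.2, norm_nonneg z₀]
    exact_mod_cast this.ne'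
  rw [hLz, Fl, add_sub_cancel_right]
  simp only [add_re, add_im, mul_re, mul_im, ofReal_re, ofReal_im, I_re, I_im]
  push_cast
  field_simp
  ring
end

section
/- Let Q⁺ = {z : Re z ≤ 0, Im z ≥ 0} and Q⁻ = {z : Re z ≤ 0, Im z ≤ 0}. If z' ∈ Q⁺ \ {0} with |z'| ≥ 1 and z = F_λ(z') ∈ Q⁻, then |z' - 1| - 1 > λ⁻¹(|z - 1| - 1). -/
theorem norm_Fl_sub_one (l : ℝ) {z : ℂ} (hz : z ≠ 0) :
    ‖Fl l z - 1‖ = |1 - l + l * ‖z‖| := by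
  have hz' : ‖z‖ ≠ 0 := norm_ne_zero_iff.mpr hz
  simp only [Fl, add_sub_cancel_right, norm_mul, norm_pow, norm_div, Complex.norm_real,
    Real.norm_eq_abs, abs_norm, div_self hz', one_pow, mul_one]

theorem Complex.norm_lt_norm_sub_one_of_re_nonpos {z : ℂ} (hz : z.re ≤ 0) :
    ‖z‖ < ‖z - 1‖ := by
  have hsq : ‖z‖ ^ 2 < ‖z - 1‖ ^ 2 := by
    simp only [Complex.sq_norm, Complex.normSq_apply, Complex.sub_re, Complex.sub_im,
      Complex.one_re, Complex.one_im]
    nlinarith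
  exact lt_of_pow_lt_pow_left₀ 2 (norm_nonneg _) hsq

theorem stmt_11_general (l : ℝ) (hl : l ∈ Set.Ioo (0 : ℝ) 1) (z' : ℂ) (hz : z' ≠ 0)
    (hre : z'.re ≤ 0) :
    l⁻¹ * (‖Fl l z' - 1‖ - 1) < ‖z' - 1‖ - 1 := by
  obtain ⟨hl0, hl1⟩ := hl
  have hpos : 0 < 1 - l + l * ‖z'‖ := by
    have := mul_nonneg hl0.le (norm_nonneg z')
    linarith
  have hscale : l⁻¹ * (‖Fl l z' - 1‖ - 1) = ‖z'‖ - 1 := by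
    rw [norm_Fl_sub_one l hz, abs_of_pos hpos]
    field_simp
    ring
  rw [hscale]
  linarith [Complex.norm_lt_norm_sub_one_of_re_nonpos hre]

/-- If z' ∈ Q⁺ \ {0} with |z'| ≥ 1 and z = F_λ(z') ∈ Q⁻, then
|z' - 1| - 1 > λ⁻¹(|z - 1| - 1). -/
theorem stmt_11 (l : ℝ) (hl : l ∈ Set.Ioo (0 : ℝ) 1) (z' : ℂ) (hz : z' ≠ 0)
    (hre : z'.re ≤ 0) (him : 0 ≤ z'.im) (habs : 1 ≤ ‖z'‖)
    (hre' : (Fl l z').re ≤ 0) (him' : (Fl l z').im ≤ 0) :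
    l⁻¹ * (‖Fl l z' - 1‖ - 1) < ‖z' - 1‖ - 1 :=
  stmt_11_general l hl z' hz hre
end
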